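/- For the collisional-model channels Λ₁(ρ) = (1−2ε)ρ + ε(σ_Z ρ σ_Z + σ_X ρ σ_X) and Λ₂(ρ) = ((1−2ε)² + 4ε²)ρ + 2ε(1−2ε)(σ_Z ρ σ_Z + σ_X ρ σ_X), the unique linear intermediate map V₂₁ satisfying Λ₂ = V₂₁ ∘ Λ₁ (for 0 ≤ ε < 1/4, where Λ₁ is invertible) is a Pauli map V₂₁(ρ) = q₀ ρ + q_x σ_X ρ σ_X + q_y σ_Y ρ σ_Y + q_z σ_Z ρ σ_Z with q₀ + q_x + q_y + q_z = 1 and q_y < 0 for 0 < ε < 1/4; hence V₂₁ is not completely positive for these ε, witnessing non-Markovianity of the evolution. -/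

import Mathlib

open Matrix Complex ComplexOrder

abbrev Mat (d : ℕ) := Matrix (Fin d) (Fin d) ℂ

/-- The extension `I_n ⊗ Λ` of a matrix map `Λ` by the identity on a first tensor factor. -/
def matExt {α β : Type*} [Fintype α] [Fintype β] (n : ℕ)
    (Λ : Matrix α α ℂ → Matrix β β ℂ)
    (A : Matrix (Fin n × α) (Fin n × α) ℂ) :
    Matrix (Fin n × β) (Fin n × β) ℂ :=
  fun p q => Λ (fun k l => A (p.1, k) (q.1, l)) p.2 q.2

/-- The extension `Λ ⊗ I` of a matrix map `Λ` by the identity on a second tensor factor. -/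
def extSecond {α β : Type*} [Fintype α] [Fintype β] (n : ℕ)
    (Λ : Matrix α α ℂ → Matrix β β ℂ)
    (A : Matrix (α × Fin n) (α × Fin n) ℂ) :
    Matrix (β × Fin n) (β × Fin n) ℂ :=
  fun p q => Λ (fun k l => A (k, p.2) (l, q.2)) p.1 q.1

/-- A matrix map is positive if it preserves positive semidefiniteness. -/
def IsPosMap {α β : Type*} [Fintype α] [Fintype β]
    (Λ : Matrix α α ℂ → Matrix β β ℂ) : Prop :=
  ∀ A, A.PosSemidef → (Λ A).PosSemidef

/-- Complete positivity: every identity extension preserves positive semidefiniteness. -/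
def IsCP {α β : Type*} [Fintype α] [Fintype β]
    (Λ : Matrix α α ℂ → Matrix β β ℂ) : Prop :=
  ∀ (n : ℕ) (A : Matrix (Fin n × α) (Fin n × α) ℂ),
    A.PosSemidef → (matExt n Λ A).PosSemidef

/-- Trace preservation. -/
def IsTP {α β : Type*} [Fintype α] [Fintype β]
    (Λ : Matrix α α ℂ → Matrix β β ℂ) : Prop :=
  ∀ A, (Λ A).trace = A.trace

def IsCPTP {α β : Type*} [Fintype α] [Fintype β]
    (Λ : Matrix α α ℂ → Matrix β β ℂ) : Prop :=
  IsCP Λ ∧ IsTP Λ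

/-- The positive semidefinite square root, as `Matrix.PosSemidef.sqrt` was defined in the older Mathlib. -/
noncomputable def Matrix.PosSemidef.sqrt {n 𝕜 : Type*} [Fintype n] [DecidableEq n] [RCLike 𝕜]
    {A : Matrix n n 𝕜} (hA : A.PosSemidef) : Matrix n n 𝕜 :=
  hA.1.eigenvectorUnitary.1 * diagonal ((↑) ∘ (Real.sqrt ∘ hA.1.eigenvalues)) *
    (star hA.1.eigenvectorUnitary : Matrix n n 𝕜)

/-- The trace norm `‖A‖₁ = Tr √(AᴴA)`. -/
noncomputable def traceNorm {m : Type*} [Fintype m] [DecidableEq m] (A : Matrix m m ℂ) : ℝ :=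
  ((Matrix.posSemidef_conjTranspose_mul_self A).sqrt.trace).re

/-- The `n`-fold tensor power `Λ^{⊗n}` of a linear matrix map. -/
noncomputable def tensorPow {d : ℕ} (n : ℕ) (Λ : Mat d → Mat d)
    (A : Matrix (Fin n → Fin d) (Fin n → Fin d) ℂ) :
    Matrix (Fin n → Fin d) (Fin n → Fin d) ℂ :=
  fun p q => ∑ i : Fin n → Fin d, ∑ j : Fin n → Fin d,
    A i j * ∏ k, Λ (Matrix.single (i k) (j k) 1) (p k) (q k)

/-- The (normalized) Choi matrix `(I ⊗ Λ)(|φ₊⟩⟨φ₊|)`. -/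
noncomputable def choi {d : ℕ} (Λ : Mat d → Mat d) :
    Matrix (Fin d × Fin d) (Fin d × Fin d) ℂ :=
  fun p q => (1 / (d : ℂ)) * Λ (Matrix.single p.1 q.1 1) p.2 q.2

noncomputable def σX : Mat 2 := !![0, 1; 1, 0]
noncomputable def σY : Mat 2 := !![0, -Complex.I; Complex.I, 0]
noncomputable def σZ : Mat 2 := !![1, 0; 0, -1]

/-- The single-collision channel Λ₁. -/
noncomputable def Lam1 (ε : ℝ) (ρ : Mat 2) : Mat 2 :=
  ((1 - 2*ε : ℝ) : ℂ) • ρ + ((ε : ℝ) : ℂ) • (σZ * ρ * σZ + σX * ρ * σX)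

/-- The two-collision channel Λ₂. -/
noncomputable def Lam2 (ε : ℝ) (ρ : Mat 2) : Mat 2 :=
  (((1 - 2*ε)^2 + 4*ε^2 : ℝ) : ℂ) • ρ +
    ((2*ε*(1 - 2*ε) : ℝ) : ℂ) • (σZ * ρ * σZ + σX * ρ * σX)

/-- A general qubit Pauli map. -/
noncomputable def pauliMap (q0 qx qy qz : ℝ) (ρ : Mat 2) : Mat 2 :=
  (q0 : ℂ) • ρ + (qx : ℂ) • (σX * ρ * σX) + (qy : ℂ) • (σY * ρ * σY) + (qz : ℂ) • (σZ * ρ * σZ)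

/-- The qubit state with Bloch vector `(x, y, z)`. -/
noncomputable def bloch (x y z : ℝ) : Mat 2 :=
  (1/2 : ℂ) • !![1 + (z : ℂ), (x : ℂ) - Complex.I * (y : ℂ);
                 (x : ℂ) + Complex.I * (y : ℂ), 1 - (z : ℂ)]

/-- The coarse-grained state `λ(ρ ⊗ ρ)` of a qubit with Bloch `z`-component `rz`. -/
noncomputable def cg (rz : ℝ) : Mat 2 :=
  !![(((1 + rz)^2 / 4 : ℝ) : ℂ), 0;
     0, (((1 - rz)^2 / 4 + (1 - rz^2) / 2 : ℝ) : ℂ)]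

/-!
`Λ₁`, `Λ₂` and every Pauli map act diagonally on the Pauli basis `σX, σY, σZ` (and fix `1`),
so they compose by multiplying eigenvalues. `Λ₁` has eigenvalues `(1 - 2ε, 1 - 4ε, 1 - 2ε)`,
all nonzero for `ε < 1/4`, hence `Λ₁` is surjective and `V₂₁` is forced to be the Pauli map
with eigenvalues `λ⁽²⁾ / λ⁽¹⁾`. Its `σY` weight is `-2ε² / (1 - 2ε) < 0`, and a negative Pauli
weight is seen by testing `I ⊗ V₂₁` of the maximally entangled projector against the singlet.
-/

lemma σX_mul_mul_σX (ρ : Mat 2) : σX * ρ * σX = !![ρ 1 1, ρ 1 0; ρ 0 1, ρ 0 0] := by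
  ext i j
  fin_cases i <;> fin_cases j <;> simp [σX, Matrix.mul_apply, Matrix.vecMul, dotProduct]

lemma σY_mul_mul_σY (ρ : Mat 2) : σY * ρ * σY = !![ρ 1 1, -ρ 1 0; -ρ 0 1, ρ 0 0] := by
  ext i j
  fin_cases i <;> fin_cases j <;> simp [σY, Matrix.mul_apply, Matrix.vecMul, dotProduct] <;>
    ring_nf <;> simp [I_sq]

lemma σZ_mul_mul_σZ (ρ : Mat 2) : σZ * ρ * σZ = !![ρ 0 0, -ρ 0 1; -ρ 1 0, ρ 1 1] := by
  ext i j
  fin_cases i <;> fin_cases j <;> simp [σZ, Matrix.mul_apply, Matrix.vecMul, dotProduct]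

lemma pauliMap_apply (q0 qx qy qz : ℝ) (ρ : Mat 2) :
    pauliMap q0 qx qy qz ρ =
      !![(q0 + qz : ℂ) * ρ 0 0 + (qx + qy) * ρ 1 1, (q0 - qz : ℂ) * ρ 0 1 + (qx - qy) * ρ 1 0;
         (q0 - qz : ℂ) * ρ 1 0 + (qx - qy) * ρ 0 1, (q0 + qz : ℂ) * ρ 1 1 + (qx + qy) * ρ 0 0] := by
  ext i j
  fin_cases i <;> fin_cases j <;>
    simp [pauliMap, σX_mul_mul_σX, σY_mul_mul_σY, σZ_mul_mul_σZ] <;> ring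

/-- The Pauli map acting as `σᵢ ↦ λᵢ σᵢ` on the Pauli matrices and fixing `1`. -/
noncomputable def pauliMapOfEigenvalues (lx ly lz : ℝ) : Mat 2 → Mat 2 :=
  pauliMap ((1 + lx + ly + lz) / 4) ((1 + lx - ly - lz) / 4) ((1 - lx + ly - lz) / 4)
    ((1 - lx - ly + lz) / 4)

lemma pauliMapOfEigenvalues_apply (lx ly lz : ℝ) (ρ : Mat 2) :
    pauliMapOfEigenvalues lx ly lz ρ =
      !![((1 + lz) / 2 : ℂ) * ρ 0 0 + (1 - lz) / 2 * ρ 1 1,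
          ((lx + ly) / 2 : ℂ) * ρ 0 1 + (lx - ly) / 2 * ρ 1 0;
         ((lx + ly) / 2 : ℂ) * ρ 1 0 + (lx - ly) / 2 * ρ 0 1,
          ((1 + lz) / 2 : ℂ) * ρ 1 1 + (1 - lz) / 2 * ρ 0 0] := by
  rw [pauliMapOfEigenvalues, pauliMap_apply]
  ext i j
  fin_cases i <;> fin_cases j <;> simp <;> ring

lemma pauliMapOfEigenvalues_pauliMapOfEigenvalues (lx ly lz mx my mz : ℝ) (ρ : Mat 2) :
    pauliMapOfEigenvalues lx ly lz (pauliMapOfEigenvalues mx my mz ρ) =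
      pauliMapOfEigenvalues (lx * mx) (ly * my) (lz * mz) ρ := by
  simp only [pauliMapOfEigenvalues_apply]
  ext i j
  fin_cases i <;> fin_cases j <;> simp <;> ring

lemma pauliMapOfEigenvalues_one_one_one (ρ : Mat 2) : pauliMapOfEigenvalues 1 1 1 ρ = ρ := by
  rw [pauliMapOfEigenvalues_apply]
  ext i j
  fin_cases i <;> fin_cases j <;> norm_num

lemma pauliMapOfEigenvalues_surjective {lx ly lz : ℝ} (hx : lx ≠ 0) (hy : ly ≠ 0) (hz : lz ≠ 0) :
    Function.Surjective (pauliMapOfEigenvalues lx ly lz) := fun ρ =>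
  ⟨pauliMapOfEigenvalues lx⁻¹ ly⁻¹ lz⁻¹ ρ, by
    rw [pauliMapOfEigenvalues_pauliMapOfEigenvalues, mul_inv_cancel₀ hx, mul_inv_cancel₀ hy,
      mul_inv_cancel₀ hz, pauliMapOfEigenvalues_one_one_one]⟩

lemma Lam1_eq_pauliMapOfEigenvalues (ε : ℝ) :
    Lam1 ε = pauliMapOfEigenvalues (1 - 2 * ε) (1 - 4 * ε) (1 - 2 * ε) := by
  funext ρ
  rw [pauliMapOfEigenvalues_apply]
  ext i j
  fin_cases i <;> fin_cases j <;> simp [Lam1, σX_mul_mul_σX, σZ_mul_mul_σZ] <;> ring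

lemma Lam2_eq_pauliMapOfEigenvalues (ε : ℝ) :
    Lam2 ε = pauliMapOfEigenvalues ((1 - 2 * ε) ^ 2 + 4 * ε ^ 2) ((1 - 4 * ε) ^ 2)
      ((1 - 2 * ε) ^ 2 + 4 * ε ^ 2) := by
  funext ρ
  rw [pauliMapOfEigenvalues_apply]
  ext i j
  fin_cases i <;> fin_cases j <;> simp [Lam2, σX_mul_mul_σX, σZ_mul_mul_σZ] <;> ring

lemma pauliMap_not_isCP {q0 qx qy qz : ℝ} (hy : qy < 0) : ¬ IsCP (pauliMap q0 qx qy qz) := by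
  intro hCP
  let φ : Fin 2 × Fin 2 → ℂ := fun p => if p.1 = p.2 then 1 else 0
  let ψ : Fin 2 × Fin 2 → ℂ := Pi.single (0, 1) 1 - Pi.single (1, 0) 1
  have hform : star ψ ⬝ᵥ matExt 2 (pauliMap q0 qx qy qz) (vecMulVec φ (star φ)) *ᵥ ψ =
      ((4 * qy : ℝ) : ℂ) := by
    simp [φ, ψ, dotProduct, mulVec, matExt, vecMulVec, Fintype.sum_prod_type, Pi.single_apply,
      pauliMap_apply q0 qx qy qz (_ : Fin 2 → Fin 2 → ℂ)]
    ring
  have hnonneg := (hCP 2 _ (posSemidef_vecMulVec_self_star φ)).dotProduct_mulVec_nonneg ψ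
  rw [hform, Complex.zero_le_real] at hnonneg
  linarith

/-- for `0 < ε < 1/4` the unique linear intermediate map `V₂₁` with
`Λ₂ = V₂₁ ∘ Λ₁` is a Pauli map with coefficients summing to 1 and `q_y < 0`; hence `V₂₁`
is not completely positive, witnessing non-Markovianity. -/
theorem intermediate_map_not_CP (ε : ℝ) (h1 : 0 < ε) (h2 : ε < 1/4) :
    ∃ q0 qx qy qz : ℝ,
      q0 + qx + qy + qz = 1 ∧ qy < 0 ∧
      (∀ ρ : Mat 2, Lam2 ε ρ = pauliMap q0 qx qy qz (Lam1 ε ρ)) ∧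
      ¬ IsCP (pauliMap q0 qx qy qz) ∧
      ∀ W : Mat 2 → Mat 2, IsLinearMap ℂ W →
        (∀ ρ : Mat 2, Lam2 ε ρ = W (Lam1 ε ρ)) →
        ∀ ρ : Mat 2, W ρ = pauliMap q0 qx qy qz ρ := by
  have hc : 0 < 1 - 2 * ε := by linarith
  set μ := ((1 - 2 * ε) ^ 2 + 4 * ε ^ 2) / (1 - 2 * ε) with hμ
  have hfactor : ∀ ρ, Lam2 ε ρ = pauliMapOfEigenvalues μ (1 - 4 * ε) μ (Lam1 ε ρ) := by
    intro ρ
    rw [Lam1_eq_pauliMapOfEigenvalues, pauliMapOfEigenvalues_pauliMapOfEigenvalues,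
      Lam2_eq_pauliMapOfEigenvalues, hμ, div_mul_cancel₀ _ hc.ne', ← sq (1 - 4 * ε)]
  have hqy : (1 - μ + (1 - 4 * ε) - μ) / 4 < 0 := by
    have : 1 - 2 * ε < μ := by
      rw [hμ, lt_div_iff₀ hc]
      nlinarith
    linarith
  have hsurj : Function.Surjective (Lam1 ε) := by
    rw [Lam1_eq_pauliMapOfEigenvalues]
    exact pauliMapOfEigenvalues_surjective (by linarith) (by linarith) (by linarith)
  refine ⟨_, _, _, _, by ring, hqy, hfactor, pauliMap_not_isCP hqy, fun W _ hW ρ => ?_⟩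
  exact congrFun (hsurj.injective_comp_right (funext fun ρ => (hW ρ).symm.trans (hfactor ρ))) ρ
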